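/- Equivalence of mixed DG and primal IPDG (algebraic direction): suppose (u_h, p_h) satisfies a_h(p_h,q_h) − b_h(u_h,q_h) = d_{1,h}(u_h,q_h) for all q_h ∈ Q_h and d_h(v_h,p_h) + c_h(u_h,v_h) = ℓ_{2,h}(v_h) + d_{2,h}(u_h,v_h) for all v_h ∈ U_h, where curl_h U_h ⊆ Q_h and α is piecewise constant so that α curl_h v_h ∈ Q_h. Then substituting q_h = α curl_h v_h into the first equation, multiplying appropriately and subtracting from the second yields a_{IP}(u_h, v_h) = (f, v_h) for all v_h ∈ U_h, where a_{IP} is the IPDG bilinear form a_{IP}(u,v) = (βu,v) + (α curl_h u, curl_h v) − ⟨{{α curl_h v}}, [[u]]⟩ − ⟨{{α curl_h u}}, [[v]]⟩ + κ⟨h_e⁻¹[[u]],[[v]]⟩. -/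

import Mathlib

/-! Testing the first mixed equation with `q = α curl v` expresses the coupling term
`(curl v, α p_h)` of the second one through `u_h` alone, since `α` is self-adjoint and the
pairing symmetric; substituting it turns the second equation into the IPDG equation. -/

theorem pairing_apply_selfAdjoint_eq_of_forall {Q : Type*} [AddCommGroup Q] [Module ℝ Q]
    (ip : Q →ₗ[ℝ] Q →ₗ[ℝ] ℝ) (hsym : ∀ p q : Q, ip p q = ip q p)
    (A : Q →ₗ[ℝ] Q) (hA : ∀ p q : Q, ip (A p) q = ip p (A q))
    {p r : Q} {j : Q → ℝ} (h : ∀ q : Q, ip p q - ip r q = -j q) (w : Q) :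
    ip w (A p) = ip (A r) w - j (A w) := by
  have hw := h (A w)
  rw [hsym w, hA, hA r]
  linarith

/-- Equivalence of mixed DG and primal IPDG (algebraic direction).
Abstract data: ip is the L² pairing on Q_h (symmetric), curl is the broken curl
(with range in Q_h), αmul is multiplication by the piecewise-constant α (self-adjoint
for ip and mapping into Q_h), cβ u v = (βu,v), J q u = ⟨{{q}},[[u]]⟩, pen u v =
κ⟨h_e⁻¹[[u]],[[v]]⟩, and ℓ v = (f,v). If (u_h,p_h) solves the mixed DG system
  a_h(p_h,q) − b_h(u_h,q) = d_{1,h}(u_h,q)         (d_{1,h}(u,q) = −⟨{{q}},[[u]]⟩),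
  d_h(v,p_h) + c_h(u_h,v) = ℓ(v) + d_{2,h}(u_h,v)  (d_{2,h}(u,v) = ⟨{{α curl u}} − κh⁻¹[[u]],[[v]]⟩),
then u_h satisfies the primal IPDG equation a_IP(u_h,v) = (f,v) for all v, with
a_IP(u,v) = (βu,v) + (α curl u, curl v) − ⟨{{α curl v}},[[u]]⟩ − ⟨{{α curl u}},[[v]]⟩
            + κ⟨h⁻¹[[u]],[[v]]⟩. -/
theorem mixed_dg_implies_ipdg (U Q : Type*) [AddCommGroup U] [Module ℝ U]
    [AddCommGroup Q] [Module ℝ Q]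
    (ip : Q →ₗ[ℝ] Q →ₗ[ℝ] ℝ) (hipsym : ∀ p q : Q, ip p q = ip q p)
    (curl : U →ₗ[ℝ] Q)
    (αmul : Q →ₗ[ℝ] Q) (hα : ∀ p q : Q, ip (αmul p) q = ip p (αmul q))
    (cβ : U →ₗ[ℝ] U →ₗ[ℝ] ℝ)
    (J : Q →ₗ[ℝ] U →ₗ[ℝ] ℝ)
    (pen : U →ₗ[ℝ] U →ₗ[ℝ] ℝ)
    (ℓ : U →ₗ[ℝ] ℝ)
    (uh : U) (ph : Q)
    (heq1 : ∀ q : Q, ip ph q - ip (curl uh) q = -(J q uh))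
    (heq2 : ∀ v : U, ip (curl v) (αmul ph) + cβ uh v
      = ℓ v + (J (αmul (curl uh)) v - pen uh v)) :
    ∀ v : U,
      cβ uh v + ip (αmul (curl uh)) (curl v)
        - J (αmul (curl v)) uh - J (αmul (curl uh)) v + pen uh v = ℓ v := by
  intro v
  have hflux := pairing_apply_selfAdjoint_eq_of_forall ip hipsym αmul hα
    (j := fun q => J q uh) heq1 (curl v)
  linarith [heq2 v]
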